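/- Consider the 9-dimensional Lie algebra L_{9,61} = sl(2,R) ⋉_{2D_1} 6L_1 with nonzero brackets [X_1,X_2]=2X_2, [X_1,X_3]=−2X_3, [X_2,X_3]=X_1, [X_1,X_4]=2X_4, [X_1,X_6]=−2X_6, [X_1,X_7]=2X_7, [X_1,X_9]=−2X_9, [X_2,X_5]=2X_4, [X_2,X_6]=X_5, [X_2,X_8]=2X_7, [X_2,X_9]=X_8, [X_3,X_4]=X_5, [X_3,X_5]=2X_6, [X_3,X_7]=X_8, [X_3,X_8]=2X_9. Then the functions J_1 = x_4 x_6 − (1/4)x_5², J_2 = x_7 x_9 − (1/4)x_8², I_3 = 2 x_4 x_9 − x_5 x_8 + 2 x_6 x_7 satisfy \hat{X}_i(J_1) = \hat{X}_i(J_2) = \hat{X}_i(I_3) = 0 for all i = 1,...,9. -/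

import Mathlib

open Finset

noncomputable def Xhat (C : Fin 9 → Fin 9 → Fin 9 → ℝ) (i : Fin 9)
    (F : (Fin 9 → ℝ) → ℝ) : (Fin 9 → ℝ) → ℝ :=
  fun x => ∑ j : Fin 9, (∑ k : Fin 9, C i j k * x k) * fderiv ℝ F x (Pi.single j 1)

noncomputable def Lhalf : Fin 9 → Fin 9 → Fin 9 → ℝ := fun i j k =>
  if (i, j, k) = ((0 : Fin 9), (1 : Fin 9), (1 : Fin 9)) then (2 : ℝ) else
  if (i, j, k) = ((0 : Fin 9), (2 : Fin 9), (2 : Fin 9)) then (-2 : ℝ) else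
  if (i, j, k) = ((1 : Fin 9), (2 : Fin 9), (0 : Fin 9)) then (1 : ℝ) else
  if (i, j, k) = ((0 : Fin 9), (3 : Fin 9), (3 : Fin 9)) then (2 : ℝ) else
  if (i, j, k) = ((0 : Fin 9), (5 : Fin 9), (5 : Fin 9)) then (-2 : ℝ) else
  if (i, j, k) = ((0 : Fin 9), (6 : Fin 9), (6 : Fin 9)) then (2 : ℝ) else
  if (i, j, k) = ((0 : Fin 9), (8 : Fin 9), (8 : Fin 9)) then (-2 : ℝ) else
  if (i, j, k) = ((1 : Fin 9), (4 : Fin 9), (3 : Fin 9)) then (2 : ℝ) else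
  if (i, j, k) = ((1 : Fin 9), (5 : Fin 9), (4 : Fin 9)) then (1 : ℝ) else
  if (i, j, k) = ((1 : Fin 9), (7 : Fin 9), (6 : Fin 9)) then (2 : ℝ) else
  if (i, j, k) = ((1 : Fin 9), (8 : Fin 9), (7 : Fin 9)) then (1 : ℝ) else
  if (i, j, k) = ((2 : Fin 9), (3 : Fin 9), (4 : Fin 9)) then (1 : ℝ) else
  if (i, j, k) = ((2 : Fin 9), (4 : Fin 9), (5 : Fin 9)) then (2 : ℝ) else
  if (i, j, k) = ((2 : Fin 9), (6 : Fin 9), (7 : Fin 9)) then (1 : ℝ) else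
  if (i, j, k) = ((2 : Fin 9), (7 : Fin 9), (8 : Fin 9)) then (2 : ℝ) else
  0

noncomputable def C (i j k : Fin 9) : ℝ := Lhalf i j k - Lhalf j i k

noncomputable def J₁ : (Fin 9 → ℝ) → ℝ := fun x => x 3 * x 5 - (1/4) * (x 4)^2
noncomputable def J₂ : (Fin 9 → ℝ) → ℝ := fun x => x 6 * x 8 - (1/4) * (x 7)^2
noncomputable def I₃ : (Fin 9 → ℝ) → ℝ := fun x => 2 * x 3 * x 8 - x 4 * x 7 + 2 * x 5 * x 6

/-!
The radical `X₄, …, X₉` is an abelian ideal, so for `i ≥ 4` the field `X̂ᵢ` only has components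
along `∂/∂x₁, ∂/∂x₂, ∂/∂x₃`, which `J₁`, `J₂`, `I₃` do not depend on. As an `sl(2)`-module the
radical is two copies of the adjoint representation `{X₄, X₅, X₆}` and `{X₇, X₈, X₉}`; `J₁`, `J₂`
are (up to scale) the Killing forms of the two copies and `I₃` their polarization across them,
so they are killed by `X̂₁, X̂₂, X̂₃`, as a direct computation with the three linear fields shows.
-/

theorem LinearMap.sum_mul_apply_single {R ι : Type*} [CommSemiring R] [Fintype ι] [DecidableEq ι]
    (f : (ι → R) →ₗ[R] R) (a : ι → R) : ∑ j, a j * f (Pi.single j 1) = f a := by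
  simp_rw [← smul_eq_mul, ← map_smul, ← Pi.single_smul', smul_eq_mul, mul_one, ← map_sum,
    Finset.univ_sum_single]

def vectorField (c : Fin 9 → Fin 9 → Fin 9 → ℝ) (i : Fin 9) (x : Fin 9 → ℝ) : Fin 9 → ℝ :=
  fun j => ∑ k, c i j k * x k

theorem Xhat_eq_fderiv (c : Fin 9 → Fin 9 → Fin 9 → ℝ) (i : Fin 9) (F : (Fin 9 → ℝ) → ℝ)
    (x : Fin 9 → ℝ) : Xhat c i F x = fderiv ℝ F x (vectorField c i x) :=
  (fderiv ℝ F x : (Fin 9 → ℝ) →ₗ[ℝ] ℝ).sum_mul_apply_single _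

theorem vectorField_C_zero (x : Fin 9 → ℝ) :
    vectorField C 0 x = ![0, 2 * x 1, -2 * x 2, 2 * x 3, 0, -2 * x 5, 2 * x 6, 0, -2 * x 8] := by
  ext j; fin_cases j <;> simp [vectorField, C, Lhalf]

theorem vectorField_C_one (x : Fin 9 → ℝ) :
    vectorField C 1 x = ![-2 * x 1, 0, x 0, 0, 2 * x 3, x 4, 0, 2 * x 6, x 7] := by
  ext j; fin_cases j <;> simp [vectorField, C, Lhalf]

theorem vectorField_C_two (x : Fin 9 → ℝ) :
    vectorField C 2 x = ![2 * x 2, -x 0, 0, x 4, 2 * x 5, 0, x 7, 2 * x 8, 0] := by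
  ext j; fin_cases j <;> simp [vectorField, C, Lhalf]

-- Index `j : Fin 9` stands for `X_(j+1)`, so `3 ≤ i, j` means both lie in the radical.
theorem vectorField_C_apply_eq_zero {i j : Fin 9} (hi : 3 ≤ i) (hj : 3 ≤ j) (x : Fin 9 → ℝ) :
    vectorField C i x j = 0 := by
  fin_cases i <;> fin_cases j <;> simp_all [vectorField, C, Lhalf]

open ContinuousLinearMap in
theorem fderiv_J₁_apply (x v : Fin 9 → ℝ) :
    fderiv ℝ J₁ x v = x 5 * v 3 + x 3 * v 5 - (1/2) * x 4 * v 4 := by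
  have e (j : Fin 9) := hasFDerivAt_apply (𝕜 := ℝ) j x
  have h : HasFDerivAt J₁ _ x := ((e 3).mul (e 5)).sub (((e 4).pow 2).const_mul (1/4 : ℝ))
  rw [h.fderiv]
  simp only [add_apply, sub_apply, smul_apply, proj_apply, smul_eq_mul, nsmul_eq_mul]
  ring

open ContinuousLinearMap in
theorem fderiv_J₂_apply (x v : Fin 9 → ℝ) :
    fderiv ℝ J₂ x v = x 8 * v 6 + x 6 * v 8 - (1/2) * x 7 * v 7 := by
  have e (j : Fin 9) := hasFDerivAt_apply (𝕜 := ℝ) j x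
  have h : HasFDerivAt J₂ _ x := ((e 6).mul (e 8)).sub (((e 7).pow 2).const_mul (1/4 : ℝ))
  rw [h.fderiv]
  simp only [add_apply, sub_apply, smul_apply, proj_apply, smul_eq_mul, nsmul_eq_mul]
  ring

open ContinuousLinearMap in
theorem fderiv_I₃_apply (x v : Fin 9 → ℝ) :
    fderiv ℝ I₃ x v = 2 * (x 8 * v 3 + x 3 * v 8) - (x 7 * v 4 + x 4 * v 7)
      + 2 * (x 6 * v 5 + x 5 * v 6) := by
  have e (j : Fin 9) := hasFDerivAt_apply (𝕜 := ℝ) j x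
  have h : HasFDerivAt I₃ _ x :=
    ((((e 3).const_mul (2 : ℝ)).mul (e 8)).sub ((e 4).mul (e 7))).add
      (((e 5).const_mul (2 : ℝ)).mul (e 6))
  rw [h.fderiv]
  simp only [add_apply, sub_apply, smul_apply, proj_apply, smul_eq_mul]
  ring

theorem fderiv_J₁_J₂_I₃_eq_zero {v : Fin 9 → ℝ} (hv : ∀ j, 3 ≤ j → v j = 0) (x : Fin 9 → ℝ) :
    fderiv ℝ J₁ x v = 0 ∧ fderiv ℝ J₂ x v = 0 ∧ fderiv ℝ I₃ x v = 0 := by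
  simp [fderiv_J₁_apply, fderiv_J₂_apply, fderiv_I₃_apply, hv]

theorem invariants_L9_61 :
    ∀ (i : Fin 9) (x : Fin 9 → ℝ),
      Xhat C i J₁ x = 0 ∧ Xhat C i J₂ x = 0 ∧ Xhat C i I₃ x = 0 := by
  intro i x
  simp only [Xhat_eq_fderiv]
  rcases lt_or_ge i 3 with hi | hi
  · obtain rfl | rfl | rfl : i = 0 ∨ i = 1 ∨ i = 2 := by omega
    all_goals
      simp only [vectorField_C_zero, vectorField_C_one, vectorField_C_two, fderiv_J₁_apply,
        fderiv_J₂_apply, fderiv_I₃_apply, Matrix.cons_val]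
      exact ⟨by ring, by ring, by ring⟩
  · exact fderiv_J₁_J₂_I₃_eq_zero (fun j hj => vectorField_C_apply_eq_zero hi hj x) x
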